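/- Let ρ be a density matrix on n ≥ 2 qubits and let i ≠ j be two qubit indices. If Tr(ρ · X_iX_j) = 1 and Tr(ρ · Z_iZ_j) = 1, where X_iX_j (resp. Z_iZ_j) denotes the Pauli operator acting as X (resp. Z) on qubits i and j and as the identity elsewhere, then ρ = |φ₊⟩⟨φ₊|_{ij} ⊗ σ, where |φ₊⟩ = (|00⟩+|11⟩)/√2 sits on qubits i and j and σ is some density matrix on the remaining n−2 qubits. -/

import Mathlib

open scoped Matrix ComplexOrder ENNReal Classical

noncomputable section

abbrev QVec (n : ℕ) := (Fin n → Fin 2) → ℂ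
abbrev QMat (n : ℕ) := Matrix (Fin n → Fin 2) (Fin n → Fin 2) ℂ

/-- `ψ` is a unit vector (a pure state). -/
def IsUnitVec {n : ℕ} (ψ : QVec n) : Prop := ∑ x, Complex.normSq (ψ x) = 1

/-- The ℓ² norm of a vector. -/
def vnorm {n : ℕ} (v : QVec n) : ℝ := Real.sqrt (∑ x, Complex.normSq (v x))

/-- The density matrix `|ψ⟩⟨ψ|`. -/
def dm {n : ℕ} (ψ : QVec n) : QMat n := Matrix.vecMulVec ψ (star ψ)

/-- The four single-qubit Pauli matrices I, X, Y, Z. -/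
def pauli1 : Fin 4 → Matrix (Fin 2) (Fin 2) ℂ :=
  ![1, !![0, 1; 1, 0], !![0, -Complex.I; Complex.I, 0], !![1, 0; 0, -1]]

/-- The `n`-qubit Pauli operator `P₁ ⊗ ⋯ ⊗ P_n` given by a string `p`. -/
def pauliOp {n : ℕ} (p : Fin n → Fin 4) : QMat n :=
  fun x y => ∏ j, pauli1 (p j) (x j) (y j)

/-- The `n`-qubit Pauli group: matrices `i^a · P₁ ⊗ ⋯ ⊗ P_n`. -/
def PauliGroup (n : ℕ) : Set (QMat n) :=
  {M | ∃ (a : Fin 4) (p : Fin n → Fin 4), M = Complex.I ^ (a : ℕ) • pauliOp p}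

/-- A Hermitian Pauli operator: `± P₁ ⊗ ⋯ ⊗ P_n`. -/
def IsHermPauli {n : ℕ} (M : QMat n) : Prop :=
  ∃ (s : ℂ) (p : Fin n → Fin 4), (s = 1 ∨ s = -1) ∧ M = s • pauliOp p

/-- The stabilizer group `G = {P ∈ 𝒫_n : P|ψ⟩ = |ψ⟩}` of a pure state. -/
def stabGroup {n : ℕ} (ψ : QVec n) : Set (QMat n) :=
  {P | P ∈ PauliGroup n ∧ P.mulVec ψ = ψ}

/-- `M` is supported on the qubits in `A` (acts as the identity on the rest),
i.e. `M = f_A ⊗ 𝟙` for some matrix `f` on the `A` qubits. -/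
def MatSupportedOn {n : ℕ} (A : Finset (Fin n)) (M : QMat n) : Prop :=
  ∃ f : ({j // j ∈ A} → Fin 2) → ({j // j ∈ A} → Fin 2) → ℂ,
    ∀ x y, M x y =
      if ∀ j ∉ A, x j = y j then f (fun j => x j.1) (fun j => y j.1) else 0

/-- The local stabilizer subgroup `G_A`: stabilizers acting as the identity outside `A`. -/
def localStab {n : ℕ} (ψ : QVec n) (A : Finset (Fin n)) : Set (QMat n) :=
  {P | P ∈ stabGroup ψ ∧ MatSupportedOn A P}

/-- `log₂` of the cardinality of a set. -/
def logCard {α : Type*} (S : Set α) : ℝ := Real.logb 2 S.ncard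

/-- The stabilizer entanglement `ℰ(ψ; A|B) = (|S| − |S_A| − |S_B|)/2` (with `B = Aᶜ`). -/
def stabEnt {n : ℕ} (ψ : QVec n) (A : Finset (Fin n)) : ℝ :=
  (logCard (stabGroup ψ) - logCard (localStab ψ A) - logCard (localStab ψ Aᶜ)) / 2

/-- Combine an assignment on `A` and on `Aᶜ` into one on all qubits. -/
def mergeFn {n : ℕ} (A : Finset (Fin n)) (x : {j // j ∈ A} → Fin 2)
    (z : {j // j ∈ Aᶜ} → Fin 2) : Fin n → Fin 2 :=
  fun j => if h : j ∈ A then x ⟨j, h⟩ else z ⟨j, Finset.mem_compl.mpr h⟩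

/-- The reduced density matrix `ψ_A = Tr_{Aᶜ} |ψ⟩⟨ψ|`. -/
def reducedDM {n : ℕ} (A : Finset (Fin n)) (ψ : QVec n) :
    Matrix ({j // j ∈ A} → Fin 2) ({j // j ∈ A} → Fin 2) ℂ :=
  fun x y => ∑ z : {j // j ∈ Aᶜ} → Fin 2, ψ (mergeFn A x z) * star (ψ (mergeFn A y z))

/-- The α-Rényi entropy (base 2) of a Hermitian matrix, defined through its eigenvalues:
`S₀ = log₂ rank`, `S₁` the von Neumann entropy, `S_∞ = −log₂` (largest eigenvalue, which is
the operator norm for positive semidefinite matrices), and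
`S_α = (1−α)⁻¹ log₂ Σ λ_i^α` otherwise. -/
def renyi {m : Type*} [Fintype m] [DecidableEq m] (α : ℝ≥0∞)
    (ρ : Matrix m m ℂ) : ℝ :=
  if h : ρ.IsHermitian then
    if α = 0 then Real.logb 2 (ρ.rank : ℝ)
    else if α = 1 then -∑ i, h.eigenvalues i * Real.logb 2 (h.eigenvalues i)
    else if α = ⊤ then -Real.logb 2 (⨆ i, h.eigenvalues i)
    else (1 / (1 - α.toReal)) * Real.logb 2 (∑ i, h.eigenvalues i ^ α.toReal)
  else 0

def IsUnitary {n : ℕ} (U : QMat n) : Prop := U * Uᴴ = 1 ∧ Uᴴ * U = 1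

/-- A Clifford unitary: a unitary whose conjugation action maps the Pauli group onto itself. -/
def IsClifford {n : ℕ} (U : QMat n) : Prop :=
  IsUnitary U ∧ (fun P => U * P * Uᴴ) '' PauliGroup n = PauliGroup n

/-- Amplitudes of the Bell pair `|φ₊⟩ = (|00⟩+|11⟩)/√2`. -/
def bellAmp (a b : Fin 2) : ℂ := if a = b then ((Real.sqrt 2 : ℝ) : ℂ)⁻¹ else 0

/-- Trace out the last `m` qubits of a pure state on `n + m` qubits. -/
def traceOutLast {n m : ℕ} (Ψ : QVec (n + m)) : QMat n :=
  fun x y => ∑ z : Fin m → Fin 2,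
    Ψ (Fin.append x z) * star (Ψ (Fin.append y z))

/-- `Tr √ρ` for a positive semidefinite matrix (junk value `0` otherwise). -/
def sqrtTrace {m : Type*} [Fintype m] [DecidableEq m] (ρ : Matrix m m ℂ) : ℝ :=
  if h : ρ.PosSemidef then
    (h.1.eigenvectorUnitary.1 * Matrix.diagonal (((↑) : ℝ → ℂ) ∘ Real.sqrt ∘ h.1.eigenvalues) *
      (star h.1.eigenvectorUnitary : Matrix m m ℂ)).trace.re else 0

/-- `S_{1/2}(ψ_A) = 2 log₂ Tr √ψ_A`. -/
def sHalf {n : ℕ} (A : Finset (Fin n)) (ψ : QVec n) : ℝ :=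
  2 * Real.logb 2 (sqrtTrace (reducedDM A ψ))

/-- The set `SEP^{(E)}(A;B)`: convex hull of pure states with `S_{1/2}` entanglement ≤ E. -/
def SEPE {n : ℕ} (A : Finset (Fin n)) (E : ℝ) : Set (QMat n) :=
  convexHull ℝ {ρ | ∃ ψ : QVec n, IsUnitVec ψ ∧ sHalf A ψ ≤ E ∧ ρ = dm ψ}

/-- `ψ` is a product state across the bipartition `A | Aᶜ`. -/
def IsProdAcross {n : ℕ} (A : Finset (Fin n)) (ψ : QVec n) : Prop :=
  ∃ (f : ({j // j ∈ A} → Fin 2) → ℂ) (g : ({j // j ∈ Aᶜ} → Fin 2) → ℂ),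
    ∀ x, ψ x = f (fun j => x j.1) * g (fun j => x j.1)

/-- The separable states across `A | Aᶜ`. -/
def SEPset {n : ℕ} (A : Finset (Fin n)) : Set (QMat n) :=
  convexHull ℝ {ρ | ∃ ψ : QVec n, IsUnitVec ψ ∧ IsProdAcross A ψ ∧ ρ = dm ψ}

/-- The trace norm `‖X‖₁ = Tr √(XᴴX)` (sum of singular values). -/
def traceNorm {m : Type*} [Fintype m] [DecidableEq m] (X : Matrix m m ℂ) : ℝ :=
  sqrtTrace (Xᴴ * X)

end

/-! For a Hermitian involution `S`, `(1 - S) / 2` is a projection, and `Tr(ρ S) = Tr ρ` says that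
`ρ` gives it zero weight, hence `S ρ = ρ S = ρ`. For `S = X_iX_j` this makes the entries of `ρ`
invariant under flipping bits `i` and `j` of the row (or the column) index; for `S = Z_iZ_j` it
kills every entry whose row or column index has `x_i ≠ x_j`. So `ρ` is determined by its block
with `x_i = x_j = 0`, and twice that block is the state `σ`. -/

open Matrix

namespace Matrix.PosSemidef

variable {m 𝕜 : Type*} [Fintype m] [DecidableEq m] [RCLike 𝕜] {ρ : Matrix m m 𝕜}

open scoped MatrixOrder in
theorem mul_eq_zero_of_trace_conjTranspose_mul_mul_eq_zero (hρ : ρ.PosSemidef)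
    {T : Matrix m m 𝕜} (h : (Tᴴ * ρ * T).trace = 0) : ρ * T = 0 := by
  obtain ⟨C, rfl⟩ := CStarAlgebra.nonneg_iff_eq_star_mul_self.mp hρ.nonneg
  rw [star_eq_conjTranspose] at h ⊢
  have hCT : C * T = 0 := by
    rw [← trace_conjTranspose_mul_self_eq_zero_iff, conjTranspose_mul]
    simpa only [Matrix.mul_assoc] using h
  rw [Matrix.mul_assoc, hCT, Matrix.mul_zero]

theorem mul_eq_self_of_trace_mul_eq_trace (hρ : ρ.PosSemidef) {S : Matrix m m 𝕜}
    (hS : S.IsHermitian) (hSS : S * S = 1) (h : (ρ * S).trace = ρ.trace) :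
    ρ * S = ρ ∧ S * ρ = ρ := by
  have hTh : (1 - S)ᴴ = 1 - S := by rw [conjTranspose_sub, conjTranspose_one, hS.eq]
  have hT : (1 - S) * (1 - S) = 2 • (1 - S) := by
    rw [sub_mul, one_mul, mul_sub, mul_one, hSS]
    module
  have hzero : ((1 - S)ᴴ * ρ * (1 - S)).trace = 0 := by
    rw [hTh, trace_mul_comm, ← Matrix.mul_assoc, hT, Matrix.smul_mul, trace_smul, trace_mul_comm,
      Matrix.mul_sub, Matrix.mul_one, trace_sub, h, sub_self, smul_zero]
  have hright : ρ * S = ρ := by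
    have := hρ.mul_eq_zero_of_trace_conjTranspose_mul_mul_eq_zero hzero
    rwa [Matrix.mul_sub, Matrix.mul_one, sub_eq_zero, eq_comm] at this
  refine ⟨hright, ?_⟩
  simpa only [conjTranspose_mul, hS.eq, hρ.1.eq] using congrArg (·ᴴ) hright

end Matrix.PosSemidef

section DiagonalMul

variable {m R : Type*} [Fintype m] [DecidableEq m] [Field R] [CharZero R] {d : m → R}
  {M : Matrix m m R}

theorem apply_eq_zero_of_diagonal_mul_eq (h : diagonal d * M = M) {x : m} (hx : d x = -1)
    (y : m) : M x y = 0 := by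
  have := congrFun₂ h x y
  rw [diagonal_mul, hx] at this
  linear_combination -this / 2

theorem apply_eq_zero_of_mul_diagonal_eq (h : M * diagonal d = M) (x : m) {y : m}
    (hy : d y = -1) : M x y = 0 := by
  have := congrFun₂ h x y
  rw [mul_diagonal, hy] at this
  linear_combination -this / 2

end DiagonalMul

section Pauli

variable {n : ℕ}

theorem pauli1_isHermitian (a : Fin 4) : (pauli1 a).IsHermitian := by
  ext r c
  fin_cases a <;> fin_cases r <;> fin_cases c <;> simp [pauli1]

theorem pauli1_mul_self (a : Fin 4) : pauli1 a * pauli1 a = 1 := by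
  ext r c
  fin_cases a <;> fin_cases r <;> fin_cases c <;> simp [pauli1, Matrix.mul_apply, Fin.sum_univ_two]

theorem pauli1_one_eq_permMatrix :
    pauli1 1 = (Equiv.swap 0 1 : Equiv.Perm (Fin 2)).permMatrix ℂ := by
  ext r c
  fin_cases r <;> fin_cases c <;> simp [pauli1]

theorem pauli1_three_eq_diagonal : pauli1 3 = diagonal ![1, -1] := by
  ext r c
  fin_cases r <;> fin_cases c <;> simp [pauli1]

theorem pauliOp_isHermitian (p : Fin n → Fin 4) : (pauliOp p).IsHermitian := by
  ext x y
  simp only [conjTranspose_apply, pauliOp, star_prod]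
  exact Finset.prod_congr rfl fun k _ => (pauli1_isHermitian (p k)).apply (x k) (y k)

theorem pauliOp_mul_pauliOp (p q : Fin n → Fin 4) :
    pauliOp p * pauliOp q = fun x y => ∏ k, (pauli1 (p k) * pauli1 (q k)) (x k) (y k) := by
  ext x y
  simp only [pauliOp, Matrix.mul_apply, ← Finset.prod_mul_distrib, Fintype.prod_sum]

theorem pauliOp_mul_self (p : Fin n → Fin 4) : pauliOp p * pauliOp p = 1 := by
  ext x y
  simp [pauliOp_mul_pauliOp, pauli1_mul_self, one_apply, Fintype.prod_boole, funext_iff]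

theorem pauliOp_eq_permMatrix {p : Fin n → Fin 4} (π : Fin n → Equiv.Perm (Fin 2))
    (h : ∀ k, pauli1 (p k) = (π k).permMatrix ℂ) :
    pauliOp p = Equiv.Perm.permMatrix ℂ (Equiv.piCongrRight π) := by
  ext x y
  simp [pauliOp, h, Fintype.prod_boole, funext_iff]

theorem pauliOp_eq_diagonal {p : Fin n → Fin 4} (d : Fin n → Fin 2 → ℂ)
    (h : ∀ k, pauli1 (p k) = diagonal (d k)) :
    pauliOp p = diagonal fun x => ∏ k, d k (x k) := by
  ext x y
  simp only [pauliOp, h, diagonal_apply]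
  split_ifs with hxy
  · simp [hxy]
  · obtain ⟨k, hk⟩ := Function.ne_iff.mp hxy
    exact Finset.prod_eq_zero (Finset.mem_univ k) (if_neg hk)

end Pauli

section PairOfQubits

variable {n : ℕ} {i j : Fin n}

def flipPair (i j : Fin n) : Equiv.Perm (Fin n → Fin 2) :=
  Equiv.piCongrRight fun k => if k = i ∨ k = j then Equiv.swap 0 1 else 1

def pairSign (i j : Fin n) (x : Fin n → Fin 2) : ℂ :=
  ∏ k, (if k = i ∨ k = j then ![1, -1] else 1) (x k)

theorem pauliOp_XX_eq_permMatrix :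
    pauliOp (fun k => if k = i ∨ k = j then 1 else 0) = (flipPair i j).permMatrix ℂ :=
  pauliOp_eq_permMatrix _ fun k => by
    split_ifs
    · exact pauli1_one_eq_permMatrix
    · exact (permMatrix_one).symm

theorem pauliOp_ZZ_eq_diagonal :
    pauliOp (fun k => if k = i ∨ k = j then 3 else 0) = diagonal (pairSign i j) :=
  pauliOp_eq_diagonal _ fun k => by
    split_ifs
    · exact pauli1_three_eq_diagonal
    · exact diagonal_one.symm

theorem pairSign_eq_neg_one (hij : i ≠ j) {x : Fin n → Fin 2} (hx : x i ≠ x j) :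
    pairSign i j x = -1 := by
  rw [pairSign, ← Finset.prod_subset (Finset.subset_univ {i, j}) fun k _ hk => by simp_all,
    Finset.prod_pair hij]
  have hxj : x j = x i + 1 := by omega
  rcases Fin.exists_fin_two.mp ⟨x i, rfl⟩ with h | h <;> simp [hxj, h]

abbrev pairCompl (i j : Fin n) : Finset (Fin n) := {i, j}ᶜ

variable (β : Type*)

def splitPair (hij : i ≠ j) : (Fin n → β) ≃ β × β × ({k // k ∈ pairCompl i j} → β) where
  toFun x := (x i, x j, fun k => x k)
  invFun t k := if h : k ∈ pairCompl i j then t.2.2 ⟨k, h⟩ else if k = i then t.1 else t.2.1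
  left_inv x := by
    funext k
    by_cases h : k ∈ pairCompl i j
    · exact dif_pos h
    · obtain rfl | rfl : k = i ∨ k = j := by simpa [or_iff_not_imp_left] using h
      all_goals simp only [dif_neg h, hij.symm, if_true, if_false]
  right_inv t := by
    have hi : i ∉ pairCompl i j := by simp
    have hj : j ∉ pairCompl i j := by simp
    ext
    · exact (dif_neg hi).trans (if_pos rfl)
    · exact (dif_neg hj).trans (if_neg hij.symm)
    · exact dif_pos _

variable {β} (hij : i ≠ j) (t : β × β × ({k // k ∈ pairCompl i j} → β))

theorem splitPair_symm_apply_left : (splitPair β hij).symm t i = t.1 :=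
  congrArg Prod.fst ((splitPair β hij).apply_symm_apply t)

theorem splitPair_symm_apply_right : (splitPair β hij).symm t j = t.2.1 :=
  congrArg (·.2.1) ((splitPair β hij).apply_symm_apply t)

theorem splitPair_symm_restrict : (fun k => (splitPair β hij).symm t k.1) = t.2.2 :=
  congrArg (·.2.2) ((splitPair β hij).apply_symm_apply t)

end PairOfQubits

section BellFactor

variable {n : ℕ} {i j : Fin n}

theorem splitPair_flipPair (hij : i ≠ j) (x : Fin n → Fin 2) :
    splitPair (Fin 2) hij (flipPair i j x) =
      (Equiv.swap 0 1 (x i), Equiv.swap 0 1 (x j), fun k => x k.1) := by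
  have hk : ∀ k : {k // k ∈ pairCompl i j}, ¬(k.1 = i ∨ k.1 = j) := fun k => by
    simpa using k.2
  simp [splitPair, flipPair, hk]

theorem flipPair_splitPair_symm (hij : i ≠ j)
    (t : Fin 2 × Fin 2 × ({k // k ∈ pairCompl i j} → Fin 2)) :
    flipPair i j ((splitPair (Fin 2) hij).symm t) =
      (splitPair (Fin 2) hij).symm (Equiv.swap 0 1 t.1, Equiv.swap 0 1 t.2.1, t.2.2) := by
  apply (splitPair (Fin 2) hij).injective
  rw [splitPair_flipPair, Equiv.apply_symm_apply, splitPair_symm_apply_left,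
    splitPair_symm_apply_right, splitPair_symm_restrict]

theorem apply_eq_apply_splitPair_symm_zero {α : Type*} (hij : i ≠ j)
    {f : (Fin n → Fin 2) → α} (hf : ∀ x, f (flipPair i j x) = f x)
    {x : Fin n → Fin 2} (hx : x i = x j) :
    f x = f ((splitPair (Fin 2) hij).symm (0, 0, fun k => x k.1)) := by
  have hx' : (splitPair (Fin 2) hij).symm (x j, x j, fun k => x k.1) = x :=
    (splitPair (Fin 2) hij).symm_apply_eq.mpr (Prod.ext hx.symm rfl)
  rcases Fin.exists_fin_two.mp ⟨x j, rfl⟩ with h | h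
  · conv_lhs => rw [← hx', h]
  · conv_lhs => rw [← hx', h, ← hf, flipPair_splitPair_symm]
    rfl

theorem bellAmp_mul_star_bellAmp_self (a b : Fin 2) :
    bellAmp a a * star (bellAmp b b) = 1 / 2 := by
  have hsq : ((Real.sqrt 2 : ℝ) : ℂ) * ((Real.sqrt 2 : ℝ) : ℂ) = 2 := by
    rw [← Complex.ofReal_mul, Real.mul_self_sqrt zero_le_two, Complex.ofReal_ofNat]
  simp [bellAmp, Complex.conj_ofReal, ← mul_inv, hsq]

theorem sum_bellAmp_mul_star_bellAmp :
    ∑ a, ∑ b, bellAmp a b * star (bellAmp a b) = 1 := by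
  simp only [Fin.sum_univ_two, bellAmp_mul_star_bellAmp_self]
  norm_num [bellAmp]

/-- The factor `2 = 1 / |⟨00|φ₊⟩|²` makes this the normalized state on the other qubits. -/
def pairBlock (hij : i ≠ j) (M : QMat n) :
    Matrix ({k // k ∈ pairCompl i j} → Fin 2) ({k // k ∈ pairCompl i j} → Fin 2) ℂ :=
  (2 : ℂ) • M.submatrix (fun u => (splitPair (Fin 2) hij).symm (0, 0, u))
    (fun u => (splitPair (Fin 2) hij).symm (0, 0, u))

theorem eq_bellAmp_mul_pairBlock (hij : i ≠ j) {M : QMat n}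
    (hXl : (flipPair i j).permMatrix ℂ * M = M) (hXr : M * (flipPair i j).permMatrix ℂ = M)
    (hZl : diagonal (pairSign i j) * M = M) (hZr : M * diagonal (pairSign i j) = M)
    (x y : Fin n → Fin 2) :
    M x y = bellAmp (x i) (x j) * star (bellAmp (y i) (y j)) *
      pairBlock hij M (fun k => x k.1) (fun k => y k.1) := by
  rw [PEquiv.toMatrix_toPEquiv_mul] at hXl
  rw [PEquiv.mul_toMatrix_toPEquiv] at hXr
  by_cases hx : x i = x j
  · by_cases hy : y i = y j
    · rw [apply_eq_apply_splitPair_symm_zero hij (f := (M · y)) (fun x => congrFun₂ hXl x y) hx,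
        apply_eq_apply_splitPair_symm_zero hij (f := (M _ ·)) (fun y => ?_) hy, hx, hy,
        bellAmp_mul_star_bellAmp_self, pairBlock]
      · simp
      · simpa using (congrFun₂ hXr _ (flipPair i j y)).symm
    · simp [apply_eq_zero_of_mul_diagonal_eq hZr x (pairSign_eq_neg_one hij hy), bellAmp, hy]
  · simp [apply_eq_zero_of_diagonal_mul_eq hZl (pairSign_eq_neg_one hij hx), bellAmp, hx]

theorem trace_eq_trace_of_eq_bellAmp_mul (hij : i ≠ j) {M : QMat n}
    {σ : Matrix ({k // k ∈ pairCompl i j} → Fin 2) ({k // k ∈ pairCompl i j} → Fin 2) ℂ}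
    (h : ∀ x y, M x y = bellAmp (x i) (x j) * star (bellAmp (y i) (y j)) *
      σ (fun k => x k.1) (fun k => y k.1)) :
    M.trace = σ.trace := by
  let Φ := splitPair (Fin 2) hij
  calc M.trace = ∑ t, M (Φ.symm t) (Φ.symm t) := (Φ.symm.sum_comp _).symm
    _ = ∑ t : Fin 2 × Fin 2 × _,
          bellAmp t.1 t.2.1 * star (bellAmp t.1 t.2.1) * σ t.2.2 t.2.2 := by
      refine Fintype.sum_congr _ _ fun t => ?_
      rw [h, splitPair_symm_apply_left, splitPair_symm_apply_right, splitPair_symm_restrict]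
    _ = (∑ a, ∑ b, bellAmp a b * star (bellAmp a b)) * σ.trace := by
      simp only [Fintype.sum_prod_type, Finset.sum_mul, ← Finset.mul_sum, trace, diag_apply]
    _ = σ.trace := by rw [sum_bellAmp_mul_star_bellAmp, one_mul]

end BellFactor

theorem statement9_general (n : ℕ) (i j : Fin n) (hij : i ≠ j)
    (ρ : QMat n) (hρ : ρ.PosSemidef) (htr : ρ.trace = 1)
    (hX : Matrix.trace (ρ * pauliOp (fun k => if k = i ∨ k = j then 1 else 0)) = 1)
    (hZ : Matrix.trace (ρ * pauliOp (fun k => if k = i ∨ k = j then 3 else 0)) = 1) :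
    ∃ σ : Matrix ({k // k ∈ (({i, j} : Finset (Fin n))ᶜ : Finset (Fin n))} → Fin 2)
        ({k // k ∈ (({i, j} : Finset (Fin n))ᶜ : Finset (Fin n))} → Fin 2) ℂ,
      σ.PosSemidef ∧ σ.trace = 1 ∧
      ∀ x y, ρ x y = bellAmp (x i) (x j) * star (bellAmp (y i) (y j)) *
        σ (fun m => x m.1) (fun m => y m.1) := by
  obtain ⟨hρX, hXρ⟩ := hρ.mul_eq_self_of_trace_mul_eq_trace (pauliOp_isHermitian _)
    (pauliOp_mul_self _) (hX.trans htr.symm)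
  obtain ⟨hρZ, hZρ⟩ := hρ.mul_eq_self_of_trace_mul_eq_trace (pauliOp_isHermitian _)
    (pauliOp_mul_self _) (hZ.trans htr.symm)
  rw [pauliOp_XX_eq_permMatrix] at hρX hXρ
  rw [pauliOp_ZZ_eq_diagonal] at hρZ hZρ
  have hfactor := eq_bellAmp_mul_pairBlock hij hXρ hρX hZρ hρZ
  refine ⟨pairBlock hij ρ, (hρ.submatrix _).smul zero_le_two, ?_, hfactor⟩
  rw [← trace_eq_trace_of_eq_bellAmp_mul hij hfactor, htr]

/-- if a density matrix `ρ` satisfies `Tr(ρ X_iX_j) = Tr(ρ Z_iZ_j) = 1`,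
then `ρ = |φ₊⟩⟨φ₊|_{ij} ⊗ σ` for some density matrix `σ` on the remaining qubits. -/
theorem statement9 (n : ℕ) (hn : 2 ≤ n) (i j : Fin n) (hij : i ≠ j)
    (ρ : QMat n) (hρ : ρ.PosSemidef) (htr : ρ.trace = 1)
    (hX : Matrix.trace (ρ * pauliOp (fun k => if k = i ∨ k = j then 1 else 0)) = 1)
    (hZ : Matrix.trace (ρ * pauliOp (fun k => if k = i ∨ k = j then 3 else 0)) = 1) :
    ∃ σ : Matrix ({k // k ∈ (({i, j} : Finset (Fin n))ᶜ : Finset (Fin n))} → Fin 2)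
        ({k // k ∈ (({i, j} : Finset (Fin n))ᶜ : Finset (Fin n))} → Fin 2) ℂ,
      σ.PosSemidef ∧ σ.trace = 1 ∧
      ∀ x y, ρ x y = bellAmp (x i) (x j) * star (bellAmp (y i) (y j)) *
        σ (fun m => x m.1) (fun m => y m.1) :=
  statement9_general n i j hij ρ hρ htr hX hZ
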